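/- arXiv:2005.01019 — 2 statements merged into one kernel-verified Lean document; each statement's English description precedes it below -/
import Mathlib

section
/- Let L > 0, R > 0 and r > 0 satisfy r ≤ R and L ≥ √(8π)·R, and let W = [0,L]² ⊆ ℝ². Define V₀ := {(x,y,z,w) ∈ W⁴ : ‖x−y‖ > 2R, z ∈ B(x,r) ∪ B(y,r), w ∉ B(x,R) ∪ B(y,R)}. Then the Lebesgue measure of V₀ in (ℝ²)⁴ satisfies |V₀| ≥ (π r²/16)·|W|³. -/
open MeasureTheory Metric

noncomputable section

namespace V0Aux

abbrev E2 := EuclideanSpace ℝ (Fin 2)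

lemma coord_measurable (i : Fin 2) : Measurable fun x : E2 => x i :=
  (EuclideanSpace.proj i : E2 →L[ℝ] ℝ).continuous.measurable

lemma coord_abs_le_dist (x y : E2) (i : Fin 2) : |x i - y i| ≤ dist x y := by
  rw [EuclideanSpace.dist_eq]
  have h1 : |x i - y i| = Real.sqrt ((x i - y i) ^ 2) := (Real.sqrt_sq_eq_abs _).symm
  rw [h1]
  apply Real.sqrt_le_sqrt
  have := Finset.single_le_sum (f := fun j : Fin 2 => dist (x j) (y j) ^ 2)
    (fun j _ => sq_nonneg _) (Finset.mem_univ i)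
  simpa [Real.dist_eq] using this

lemma volume_box (a b : ℝ) :
    volume {x : E2 | x 0 ∈ Set.Icc a b ∧ x 1 ∈ Set.Icc a b} = ENNReal.ofReal (b - a) ^ 2 := by
  have hmp := (EuclideanSpace.volume_preserving_symm_measurableEquiv_toLp (ι := Fin 2)).symm
  have hms : MeasurableSet {x : E2 | x 0 ∈ Set.Icc a b ∧ x 1 ∈ Set.Icc a b} :=
    (coord_measurable 0 measurableSet_Icc).inter (coord_measurable 1 measurableSet_Icc)
  rw [← hmp.measure_preimage hms.nullMeasurableSet]
  have hset : (MeasurableEquiv.toLp 2 (Fin 2 → ℝ)).symm.symm ⁻¹'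
      {x : E2 | x 0 ∈ Set.Icc a b ∧ x 1 ∈ Set.Icc a b}
      = Set.univ.pi (fun _ : Fin 2 => Set.Icc a b) := by
    ext x
    simp only [Set.mem_preimage, Set.mem_setOf_eq, Set.mem_pi, Set.mem_univ, true_implies,
      Fin.forall_fin_two]
    exact Iff.rfl
  rw [hset, volume_pi_pi]
  simp [Real.volume_Icc, sq]

lemma volume_ball2 (x : E2) {s : ℝ} (hs : 0 ≤ s) :
    volume (ball x s) = ENNReal.ofReal (Real.pi * s ^ 2) := by
  rw [EuclideanSpace.volume_ball]
  have : ((Fintype.card (Fin 2) : ℝ) / 2 + 1) = 2 := by simp; norm_num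
  rw [Fintype.card_fin] at *
  rw [show ((2:ℕ) : ℝ) / 2 + 1 = 2 by norm_num, Real.Gamma_two, Real.sq_sqrt Real.pi_pos.le,
    div_one, ← ENNReal.ofReal_pow hs, ← ENNReal.ofReal_mul (by positivity)]
  rw [mul_comm]


lemma volume_closedBall2 (x : E2) {s : ℝ} (hs : 0 ≤ s) :
    volume (closedBall x s) = ENNReal.ofReal (Real.pi * s ^ 2) := by
  rw [Measure.addHaar_closedBall_eq_addHaar_ball, volume_ball2 x hs]

end V0Aux

open V0Aux
open scoped ENNReal

/-- Lower bound on the measure of the set `V₀` from the proof of Theorem 2: for the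
square window `W = [0,L]²` with `L ≥ √(8π)·R` and `0 < r ≤ R`, the set of quadruples
`(x,y,z,w) ∈ W⁴` with `‖x-y‖ > 2R`, `z ∈ B(x,r) ∪ B(y,r)` and `w ∉ B(x,R) ∪ B(y,R)`
has measure at least `(πr²/16)·|W|³`. -/
theorem volume_V0_lower_bound
    (L R r : ℝ) (hL : 0 < L) (hR : 0 < R) (hr : 0 < r)
    (hrR : r ≤ R) (hLR : Real.sqrt (8 * Real.pi) * R ≤ L)
    (W : Set (EuclideanSpace ℝ (Fin 2)))
    (hW : W = {x : EuclideanSpace ℝ (Fin 2) | x 0 ∈ Set.Icc 0 L ∧ x 1 ∈ Set.Icc 0 L}) :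
    ENNReal.ofReal (Real.pi * r ^ 2 / 16) * (volume W) ^ 3 ≤
      volume {p : EuclideanSpace ℝ (Fin 2) × EuclideanSpace ℝ (Fin 2) ×
              EuclideanSpace ℝ (Fin 2) × EuclideanSpace ℝ (Fin 2) |
        p.1 ∈ W ∧ p.2.1 ∈ W ∧ p.2.2.1 ∈ W ∧ p.2.2.2 ∈ W ∧
        2 * R < ‖p.1 - p.2.1‖ ∧
        p.2.2.1 ∈ ball p.1 r ∪ ball p.2.1 r ∧
        p.2.2.2 ∉ ball p.1 R ∪ ball p.2.1 R} := by
  classical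
  -- basic real facts
  have hpi : (3.125 : ℝ) < Real.pi := by
    have := Real.pi_gt_d6; linarith
  have h5 : (5 : ℝ) ≤ Real.sqrt (8 * Real.pi) := by
    rw [Real.le_sqrt (by norm_num) (by positivity)]
    nlinarith
  have hR5 : 5 * R ≤ L := by nlinarith [Real.sqrt_nonneg (8 * Real.pi)]
  have hr5 : 5 * r ≤ L := by linarith
  have h8pi : 8 * Real.pi * R ^ 2 ≤ L ^ 2 := by
    have h0 : (0:ℝ) ≤ Real.sqrt (8 * Real.pi) * R := by positivity
    have h1 := Real.sq_sqrt (by positivity : (0:ℝ) ≤ 8 * Real.pi)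
    nlinarith
  have hWm : MeasurableSet W := by
    rw [hW]
    exact ((coord_measurable 0) measurableSet_Icc).inter ((coord_measurable 1) measurableSet_Icc)
  have hWvol : volume W = ENNReal.ofReal (L ^ 2) := by
    rw [hW, volume_box, sub_zero, ← ENNReal.ofReal_pow hL.le]
  set X : Set E2 := {x | x 0 ∈ Set.Icc r (L - r) ∧ x 1 ∈ Set.Icc r (L - r)} with hXdef
  have hXm : MeasurableSet X :=
    ((coord_measurable 0) measurableSet_Icc).inter ((coord_measurable 1) measurableSet_Icc)
  have hXvol : volume X = ENNReal.ofReal ((L - 2 * r) ^ 2) := by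
    rw [hXdef, volume_box, ← ENNReal.ofReal_pow (by linarith), show L - r - r = L - 2*r by ring]
  have hXW : X ⊆ W := by
    intro x hx
    obtain ⟨h0, h1⟩ := hx
    rw [hW]
    exact ⟨⟨by linarith [h0.1], by linarith [h0.2]⟩, ⟨by linarith [h1.1], by linarith [h1.2]⟩⟩
  have hball_sub : ∀ x ∈ X, ball x r ⊆ W := by
    intro x hx z hz
    obtain ⟨h0, h1⟩ := hx
    have hd : dist z x < r := mem_ball.mp hz
    have e0 := abs_lt.mp (lt_of_le_of_lt (coord_abs_le_dist z x 0) hd)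
    have e1 := abs_lt.mp (lt_of_le_of_lt (coord_abs_le_dist z x 1) hd)
    rw [hW]
    exact ⟨⟨by linarith [h0.1, e0.1], by linarith [h0.2, e0.2]⟩,
      ⟨by linarith [h1.1, e1.1], by linarith [h1.2, e1.2]⟩⟩
  set T : Set (E2 × E2 × E2 × E2) :=
    {p | p.1 ∈ X ∧ p.2.1 ∈ W ∧ 2 * R < dist p.1 p.2.1 ∧ p.2.2.1 ∈ ball p.1 r ∧
      p.2.2.2 ∈ W ∧ p.2.2.2 ∉ ball p.1 R ∧ p.2.2.2 ∉ ball p.2.1 R} with hTdef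
  haveI : OpensMeasurableSpace (E2 × E2 × E2 × E2) := Prod.opensMeasurableSpace
  have hTm : MeasurableSet T := by
    have c1 : Continuous fun p : E2 × E2 × E2 × E2 => p.1 := continuous_fst
    have c2 : Continuous fun p : E2 × E2 × E2 × E2 => p.2.1 := continuous_fst.comp continuous_snd
    have c3 : Continuous fun p : E2 × E2 × E2 × E2 => p.2.2.1 :=
      continuous_fst.comp (continuous_snd.comp continuous_snd)
    have c4 : Continuous fun p : E2 × E2 × E2 × E2 => p.2.2.2 :=
      continuous_snd.comp (continuous_snd.comp continuous_snd)
    refine (c1.measurable hXm).inter ((c2.measurable hWm).inter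
      (((measurableSet_lt measurable_const (c1.dist c2).measurable)).inter
      ((measurableSet_lt (c3.dist c1).measurable measurable_const).inter
      ((c4.measurable hWm).inter
      (((measurableSet_lt (c4.dist c1).measurable measurable_const).compl).inter
      ((measurableSet_lt (c4.dist c2).measurable measurable_const).compl))))))
  -- innermost bound on the w-set
  have hDbound : ∀ x y : E2,
      ENNReal.ofReal (3 / 4 * L ^ 2) ≤ volume (W ∩ (ball x R)ᶜ ∩ (ball y R)ᶜ) := by
    intro x y
    have hsub : W ⊆ (W ∩ (ball x R)ᶜ ∩ (ball y R)ᶜ) ∪ (ball x R ∪ ball y R) := by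
      intro w hw
      by_cases hb1 : w ∈ ball x R
      · exact Or.inr (Or.inl hb1)
      by_cases hb2 : w ∈ ball y R
      · exact Or.inr (Or.inr hb2)
      exact Or.inl ⟨⟨hw, hb1⟩, hb2⟩
    have hb : volume (ball x R ∪ ball y R) ≤ ENNReal.ofReal (L ^ 2 / 4) := by
      refine (measure_union_le _ _).trans ?_
      rw [volume_ball2 x hR.le, volume_ball2 y hR.le,
        ← ENNReal.ofReal_add (by positivity) (by positivity)]
      exact ENNReal.ofReal_le_ofReal (by nlinarith)
    have hchain : ENNReal.ofReal (3 / 4 * L ^ 2) + ENNReal.ofReal (L ^ 2 / 4) ≤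
        volume (W ∩ (ball x R)ᶜ ∩ (ball y R)ᶜ) + ENNReal.ofReal (L ^ 2 / 4) := by
      rw [← ENNReal.ofReal_add (by positivity) (by positivity),
        show 3 / 4 * L ^ 2 + L ^ 2 / 4 = L ^ 2 by ring, ← hWvol]
      exact (measure_mono hsub).trans ((measure_union_le _ _).trans (add_le_add_right hb _))
    exact (ENNReal.add_le_add_iff_right ENNReal.ofReal_ne_top).mp hchain
  -- bound on the y-set
  have hYbound : ∀ x : E2, ENNReal.ofReal (L ^ 2 / 2) ≤ volume (W \ closedBall x (2 * R)) := by
    intro x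
    have hsub : W ⊆ (W \ closedBall x (2 * R)) ∪ closedBall x (2 * R) := by
      intro w hw
      by_cases hb : w ∈ closedBall x (2 * R)
      · exact Or.inr hb
      · exact Or.inl ⟨hw, hb⟩
    have hb : volume (closedBall x (2 * R)) ≤ ENNReal.ofReal (L ^ 2 / 2) := by
      rw [volume_closedBall2 x (by positivity)]
      exact ENNReal.ofReal_le_ofReal (by nlinarith)
    have hchain : ENNReal.ofReal (L ^ 2 / 2) + ENNReal.ofReal (L ^ 2 / 2) ≤
        volume (W \ closedBall x (2 * R)) + ENNReal.ofReal (L ^ 2 / 2) := by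
      rw [← ENNReal.ofReal_add (by positivity) (by positivity),
        show L ^ 2 / 2 + L ^ 2 / 2 = L ^ 2 by ring, ← hWvol]
      exact (measure_mono hsub).trans ((measure_union_le _ _).trans (add_le_add_right hb _))
    exact (ENNReal.add_le_add_iff_right ENNReal.ofReal_ne_top).mp hchain
  set c2' : ℝ≥0∞ := ENNReal.ofReal (Real.pi * r ^ 2) * ENNReal.ofReal (3 / 4 * L ^ 2) with hc2'
  set c1' : ℝ≥0∞ := ENNReal.ofReal (L ^ 2 / 2) * c2' with hc1'
  have hinner : ∀ x ∈ X, ∀ y : E2, y ∈ W → 2 * R < dist x y →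
      c2' ≤ volume (Prod.mk y ⁻¹' (Prod.mk x ⁻¹' T)) := by
    intro x hx y hyW hyd
    have hset : Prod.mk y ⁻¹' (Prod.mk x ⁻¹' T)
        = (ball x r) ×ˢ (W ∩ (ball x R)ᶜ ∩ (ball y R)ᶜ) := by
      ext q
      simp only [hTdef, Set.mem_preimage, Set.mem_setOf_eq, Set.mem_prod, Set.mem_inter_iff,
        Set.mem_compl_iff]
      constructor
      · rintro ⟨_, _, _, h4, h5, h6, h7⟩; exact ⟨h4, ⟨h5, h6⟩, h7⟩
      · rintro ⟨h4, ⟨h5, h6⟩, h7⟩; exact ⟨hx, hyW, hyd, h4, h5, h6, h7⟩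
    rw [hset, Measure.volume_eq_prod, Measure.prod_prod, volume_ball2 x hr.le]
    exact mul_le_mul' le_rfl (hDbound x y)
  have hmid : ∀ x ∈ X, c1' ≤ volume (Prod.mk x ⁻¹' T) := by
    intro x hx
    have hTx : MeasurableSet (Prod.mk x ⁻¹' T) := measurable_prodMk_left hTm
    rw [Measure.volume_eq_prod, Measure.prod_apply hTx]
    have hYm : MeasurableSet (W \ closedBall x (2 * R)) := hWm.diff measurableSet_closedBall
    calc c1' = c2' * ENNReal.ofReal (L ^ 2 / 2) := mul_comm _ _
      _ ≤ c2' * volume (W \ closedBall x (2 * R)) := mul_le_mul' le_rfl (hYbound x)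
      _ = ∫⁻ y, (W \ closedBall x (2 * R)).indicator (fun _ => c2') y := by
          rw [lintegral_indicator_const hYm, mul_comm]
      _ ≤ ∫⁻ y, volume (Prod.mk y ⁻¹' (Prod.mk x ⁻¹' T)) := by
          refine lintegral_mono fun y => ?_
          by_cases hy : y ∈ W \ closedBall x (2 * R)
          · rw [Set.indicator_of_mem hy]
            refine hinner x hx y hy.1 ?_
            have h2 : ¬ dist y x ≤ 2 * R := fun h => hy.2 (mem_closedBall.mpr h)
            rw [dist_comm]
            exact lt_of_not_ge h2
          · rw [Set.indicator_of_notMem hy]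
            exact zero_le
  haveI : SFinite ((volume : Measure E2).prod (volume : Measure E2)) :=
    Measure.prod.instSFinite
  haveI : SFinite (volume : Measure (E2 × E2 × E2)) := by
    rw [Measure.volume_eq_prod, Measure.volume_eq_prod]
    exact Measure.prod.instSFinite
  have htop : ENNReal.ofReal ((L - 2 * r) ^ 2) * c1' ≤ volume T := by
    rw [Measure.volume_eq_prod, Measure.prod_apply hTm]
    calc ENNReal.ofReal ((L - 2 * r) ^ 2) * c1' = c1' * volume X := by rw [hXvol, mul_comm]
      _ = ∫⁻ x, X.indicator (fun _ => c1') x := by rw [lintegral_indicator_const hXm, mul_comm]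
      _ ≤ ∫⁻ x, volume (Prod.mk x ⁻¹' T) := by
          refine lintegral_mono fun x => ?_
          by_cases hx : x ∈ X
          · rw [Set.indicator_of_mem hx]; exact hmid x hx
          · rw [Set.indicator_of_notMem hx]; exact zero_le
  have hTS : T ⊆ {p : EuclideanSpace ℝ (Fin 2) × EuclideanSpace ℝ (Fin 2) ×
              EuclideanSpace ℝ (Fin 2) × EuclideanSpace ℝ (Fin 2) |
        p.1 ∈ W ∧ p.2.1 ∈ W ∧ p.2.2.1 ∈ W ∧ p.2.2.2 ∈ W ∧
        2 * R < ‖p.1 - p.2.1‖ ∧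
        p.2.2.1 ∈ ball p.1 r ∪ ball p.2.1 r ∧
        p.2.2.2 ∉ ball p.1 R ∪ ball p.2.1 R} := by
    rintro p ⟨h1, h2, h3, h4, h5, h6, h7⟩
    refine ⟨hXW h1, h2, hball_sub p.1 h1 h4, h5, ?_, Or.inl h4, ?_⟩
    · rw [← dist_eq_norm]; exact h3
    · rintro (h | h)
      exacts [h6 h, h7 h]
  -- final comparison
  have hL2r : 3 * L / 5 ≤ L - 2 * r := by linarith
  have hsq : (3 * L / 5) ^ 2 ≤ (L - 2 * r) ^ 2 := by nlinarith
  have hreal : Real.pi * r ^ 2 / 16 * (L ^ 2) ^ 3 ≤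
      (L - 2 * r) ^ 2 * (L ^ 2 / 2 * (Real.pi * r ^ 2 * (3 / 4 * L ^ 2))) := by
    have key := mul_le_mul_of_nonneg_right hsq
      (show (0:ℝ) ≤ 3 / 8 * (Real.pi * r ^ 2 * L ^ 4) by positivity)
    have hpos : (0:ℝ) ≤ Real.pi * r ^ 2 * L ^ 6 := by positivity
    nlinarith [key, hpos]
  calc ENNReal.ofReal (Real.pi * r ^ 2 / 16) * (volume W) ^ 3
      = ENNReal.ofReal (Real.pi * r ^ 2 / 16 * (L ^ 2) ^ 3) := by
        rw [hWvol, ← ENNReal.ofReal_pow (by positivity), ← ENNReal.ofReal_mul (by positivity)]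
    _ ≤ ENNReal.ofReal ((L - 2 * r) ^ 2 * (L ^ 2 / 2 * (Real.pi * r ^ 2 * (3 / 4 * L ^ 2)))) :=
        ENNReal.ofReal_le_ofReal hreal
    _ = ENNReal.ofReal ((L - 2 * r) ^ 2) * c1' := by
        rw [hc1', hc2', ENNReal.ofReal_mul (by positivity), ENNReal.ofReal_mul (by positivity),
          ENNReal.ofReal_mul (by positivity)]
    _ ≤ volume T := htop
    _ ≤ _ := measure_mono hTS
end
end

section
/- Let G₁, G₂, G₃, G₄ be independent real random variables on a probability space, each with the standard Gaussian law N(0,1). Let a, b, c, d, a', b', c', d' be real numbers with (a,b), (c,d), (a',b'), (c',d') all nonzero, and suppose (ac + bd)·(a'c' + b'd') ≥ 0. Then E[sgn(a·G₁ + b·G₂)·sgn(c·G₁ + d·G₂)] · E[sgn(a'·G₃ + b'·G₄)·sgn(c'·G₃ + d'·G₄)] ≥ 0. -/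
open MeasureTheory ProbabilityTheory

section Aux

open Real
open scoped ENNReal

lemma measurable_realSign : Measurable Real.sign := by
  unfold Real.sign
  exact Measurable.ite (measurableSet_lt measurable_id measurable_const) measurable_const
    (Measurable.ite (measurableSet_lt measurable_const measurable_id) measurable_const
      measurable_const)

lemma realSign_mono : Monotone Real.sign := by
  intro s t hst
  rcases lt_trichotomy s 0 with hs|hs|hs
  · rw [Real.sign_of_neg hs]
    rcases Real.sign_apply_eq t with h|h|h <;> rw [h] <;> norm_num
  · subst hs
    rw [Real.sign_zero]
    rcases lt_or_eq_of_le hst with h|h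
    · rw [Real.sign_of_pos h]; norm_num
    · rw [← h, Real.sign_zero]
  · rw [Real.sign_of_pos hs, Real.sign_of_pos (lt_of_lt_of_le hs hst)]

lemma abs_realSign_le (x : ℝ) : |Real.sign x| ≤ 1 := by
  rcases Real.sign_apply_eq x with h|h|h <;> rw [h] <;> norm_num

lemma realSign_nonneg {x : ℝ} (hx : 0 ≤ x) : 0 ≤ Real.sign x := by
  rcases lt_or_eq_of_le hx with h|h
  · rw [Real.sign_of_pos h]; norm_num
  · rw [← h, Real.sign_zero]

lemma realSign_nonpos {x : ℝ} (hx : x ≤ 0) : Real.sign x ≤ 0 := by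
  rcases lt_or_eq_of_le hx with h|h
  · rw [Real.sign_of_neg h]; norm_num
  · rw [h, Real.sign_zero]

lemma realSign_pos_mul {r : ℝ} (hr : 0 < r) (x : ℝ) : Real.sign (r * x) = Real.sign x := by
  rcases lt_trichotomy x 0 with h|h|h
  · rw [Real.sign_of_neg h, Real.sign_of_neg (mul_neg_of_pos_of_neg hr h)]
  · simp [h]
  · rw [Real.sign_of_pos h, Real.sign_of_pos (mul_pos hr h)]

lemma gaussPDFReal_prod_eq {x y x' y' : ℝ} (h : x'^2 + y'^2 = x^2 + y^2) :
    gaussianPDFReal 0 1 x' * gaussianPDFReal 0 1 y'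
      = gaussianPDFReal 0 1 x * gaussianPDFReal 0 1 y := by
  simp only [gaussianPDFReal, sub_zero, NNReal.coe_one, mul_one]
  rw [mul_mul_mul_comm, ← Real.exp_add, mul_mul_mul_comm, ← Real.exp_add]
  congr 1
  congr 1
  linear_combination (-1/2 : ℝ) * h

lemma gauss_prod_eq_withDensity :
    (gaussianReal 0 1).prod (gaussianReal 0 1)
      = (volume : Measure (ℝ × ℝ)).withDensity
          (fun p => gaussianPDF 0 1 p.1 * gaussianPDF 0 1 p.2) := by
  refine Measure.prod_eq fun s t hs ht => ?_
  rw [withDensity_apply _ (hs.prod ht), Measure.volume_eq_prod, ← Measure.prod_restrict,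
    lintegral_prod_mul (measurable_gaussianPDF 0 1).aemeasurable
      (measurable_gaussianPDF 0 1).aemeasurable,
    gaussianReal_of_var_ne_zero 0 one_ne_zero, withDensity_apply _ hs, withDensity_apply _ ht]

lemma volume_map_rot {u₁ u₂ : ℝ} (h : u₁^2 + u₂^2 = 1) :
    Measure.map (fun p : ℝ × ℝ => (u₁ * p.1 - u₂ * p.2, u₂ * p.1 + u₁ * p.2))
      (volume : Measure (ℝ × ℝ)) = volume := by
  set f := Matrix.toLin (Module.Basis.finTwoProd ℝ) (Module.Basis.finTwoProd ℝ) !![u₁, -u₂; u₂, u₁] with hf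
  have hfun : (fun p : ℝ × ℝ => (u₁ * p.1 - u₂ * p.2, u₂ * p.1 + u₁ * p.2)) = ⇑f := by
    funext p
    rw [hf, Matrix.toLin_finTwoProd_apply]
    simp [sub_eq_add_neg]
  have hdet : LinearMap.det f = 1 := by
    rw [hf, LinearMap.det_toLin, Matrix.det_fin_two_of]
    linear_combination h
  rw [hfun, Measure.map_linearMap_addHaar_eq_smul_addHaar _ (by rw [hdet]; norm_num), hdet]
  norm_num

lemma gauss_prod_map_rot {u₁ u₂ : ℝ} (h : u₁^2 + u₂^2 = 1) :
    Measure.map (fun p : ℝ × ℝ => (u₁ * p.1 - u₂ * p.2, u₂ * p.1 + u₁ * p.2))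
      ((gaussianReal 0 1).prod (gaussianReal 0 1))
      = (gaussianReal 0 1).prod (gaussianReal 0 1) := by
  set R := fun p : ℝ × ℝ => (u₁ * p.1 - u₂ * p.2, u₂ * p.1 + u₁ * p.2) with hR
  have hRm : Measurable R :=
    ((measurable_fst.const_mul u₁).sub (measurable_snd.const_mul u₂)).prodMk
      ((measurable_fst.const_mul u₂).add (measurable_snd.const_mul u₁))
  set D := fun p : ℝ × ℝ => gaussianPDF 0 1 p.1 * gaussianPDF 0 1 p.2 with hD
  have hDm : Measurable D :=
    ((measurable_gaussianPDF 0 1).comp measurable_fst).mul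
      ((measurable_gaussianPDF 0 1).comp measurable_snd)
  have hDR : ∀ p : ℝ × ℝ, D (R p) = D p := by
    intro p
    simp only [hD, hR, gaussianPDF]
    rw [← ENNReal.ofReal_mul (gaussianPDFReal_nonneg _ _ _),
      ← ENNReal.ofReal_mul (gaussianPDFReal_nonneg _ _ _)]
    exact congrArg _ (gaussPDFReal_prod_eq (by linear_combination (p.1^2 + p.2^2) * h))
  ext s hs
  rw [Measure.map_apply hRm hs, gauss_prod_eq_withDensity, withDensity_apply _ (hRm hs),
    withDensity_apply _ hs]
  have h2 := setLIntegral_map hs hDm hRm (μ := (volume : Measure (ℝ × ℝ)))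
  rw [volume_map_rot h] at h2
  simp only [hDR] at h2
  exact h2.symm

lemma gauss_map_neg : Measure.map (fun x : ℝ => -x) (gaussianReal 0 1) = gaussianReal 0 1 := by
  have h := gaussianReal_map_const_mul (μ := 0) (v := 1) (-1)
  simp only [neg_one_mul, mul_zero] at h
  rw [h]
  congr 1
  ext
  norm_num

lemma measurable_signprod (a b c d : ℝ) :
    Measurable (fun p : ℝ × ℝ => Real.sign (a * p.1 + b * p.2) * Real.sign (c * p.1 + d * p.2)) :=
  (measurable_realSign.comp ((measurable_fst.const_mul a).add (measurable_snd.const_mul b))).mul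
    (measurable_realSign.comp ((measurable_fst.const_mul c).add (measurable_snd.const_mul d)))

lemma integrable_signprod (ν : Measure (ℝ × ℝ)) [IsProbabilityMeasure ν] (a b c d : ℝ) :
    Integrable (fun p : ℝ × ℝ =>
      Real.sign (a * p.1 + b * p.2) * Real.sign (c * p.1 + d * p.2)) ν := by
  refine (integrable_const (1 : ℝ)).mono'
    (measurable_signprod a b c d).aestronglyMeasurable
    (Filter.Eventually.of_forall fun p => ?_)
  rw [Real.norm_eq_abs, abs_mul]
  exact mul_le_one₀ (abs_realSign_le _) (abs_nonneg _) (abs_realSign_le _)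

lemma key_nonneg {α β : ℝ} (hα : 0 ≤ α) :
    0 ≤ ∫ p : ℝ × ℝ, Real.sign (1 * p.1 + 0 * p.2) * Real.sign (α * p.1 + β * p.2)
        ∂((gaussianReal 0 1).prod (gaussianReal 0 1)) := by
  set ν := (gaussianReal 0 1).prod (gaussianReal 0 1) with hν
  set f := fun p : ℝ × ℝ => Real.sign (1 * p.1 + 0 * p.2) * Real.sign (α * p.1 + β * p.2) with hf
  have hfm : Measurable f := measurable_signprod 1 0 α β
  have hint : Integrable f ν := integrable_signprod ν 1 0 α β
  have hN : MeasurePreserving (Prod.map (fun x : ℝ => -x) (id : ℝ → ℝ)) ν ν :=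
    MeasurePreserving.prod ⟨measurable_neg, gauss_map_neg⟩ (MeasurePreserving.id _)
  have hint2 : Integrable (fun p : ℝ × ℝ => f (-p.1, p.2)) ν := by
    have := (hN.integrable_comp hfm.aestronglyMeasurable).mpr hint
    exact this
  have hcomp : ∫ p, f p ∂ν = ∫ p : ℝ × ℝ, f (-p.1, p.2) ∂ν := by
    conv_lhs => rw [← hN.map_eq]
    rw [integral_map hN.measurable.aemeasurable hfm.aestronglyMeasurable]
    rfl
  have hpt : ∀ p : ℝ × ℝ, 0 ≤ f p + f (-p.1, p.2) := by
    intro ⟨x, y⟩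
    simp only [hf, one_mul, zero_mul, add_zero]
    rw [Real.sign_neg]
    rcases le_total 0 x with hx|hx
    · have h1 : α * (-x) + β * y ≤ α * x + β * y := by nlinarith
      have := sub_nonneg.mpr (realSign_mono h1)
      have hs := realSign_nonneg hx
      nlinarith
    · have h1 : α * x + β * y ≤ α * (-x) + β * y := by nlinarith
      have := sub_nonneg.mpr (realSign_mono h1)
      have hs := realSign_nonpos hx
      nlinarith
  have hsum : 0 ≤ ∫ p : ℝ × ℝ, (f p + f (-p.1, p.2)) ∂ν := integral_nonneg hpt
  rw [integral_add hint hint2] at hsum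
  rw [← hcomp] at hsum
  linarith

lemma J_nonneg {a b c d : ℝ} (hab : a ≠ 0 ∨ b ≠ 0) (h : 0 ≤ a * c + b * d) :
    0 ≤ ∫ p : ℝ × ℝ, Real.sign (a * p.1 + b * p.2) * Real.sign (c * p.1 + d * p.2)
        ∂((gaussianReal 0 1).prod (gaussianReal 0 1)) := by
  have hpos : 0 < a^2 + b^2 := by rcases hab with h'|h' <;> positivity
  set r := Real.sqrt (a^2 + b^2) with hrdef
  have hr : 0 < r := Real.sqrt_pos.mpr hpos
  have hr2 : r^2 = a^2 + b^2 := Real.sq_sqrt hpos.le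
  have hu : (a/r)^2 + (b/r)^2 = 1 := by
    field_simp
    linarith [hr2]
  have hrot := gauss_prod_map_rot hu
  have hRm : Measurable (fun p : ℝ × ℝ =>
      ((a/r) * p.1 - (b/r) * p.2, (b/r) * p.1 + (a/r) * p.2)) :=
    ((measurable_fst.const_mul (a/r)).sub (measurable_snd.const_mul (b/r))).prodMk
      ((measurable_fst.const_mul (b/r)).add (measurable_snd.const_mul (a/r)))
  conv_rhs => rw [← hrot]
  rw [integral_map hRm.aemeasurable (measurable_signprod a b c d).aestronglyMeasurable]
  have hpt : ∀ p : ℝ × ℝ,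
      Real.sign (a * ((a/r) * p.1 - (b/r) * p.2) + b * ((b/r) * p.1 + (a/r) * p.2)) *
        Real.sign (c * ((a/r) * p.1 - (b/r) * p.2) + d * ((b/r) * p.1 + (a/r) * p.2))
      = Real.sign (1 * p.1 + 0 * p.2) *
          Real.sign (((a*c + b*d)/r) * p.1 + ((a*d - b*c)/r) * p.2) := by
    intro p
    have e1 : a * ((a/r) * p.1 - (b/r) * p.2) + b * ((b/r) * p.1 + (a/r) * p.2) = r * p.1 := by
      field_simp
      linear_combination (-p.1) * hr2
    have e2 : c * ((a/r) * p.1 - (b/r) * p.2) + d * ((b/r) * p.1 + (a/r) * p.2)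
        = ((a*c + b*d)/r) * p.1 + ((a*d - b*c)/r) * p.2 := by
      field_simp
      ring
    rw [e1, e2, realSign_pos_mul hr]
    norm_num
  simp_rw [hpt]
  exact key_nonneg (div_nonneg h hr.le)

lemma J_nonpos {a b c d : ℝ} (hab : a ≠ 0 ∨ b ≠ 0) (h : a * c + b * d ≤ 0) :
    (∫ p : ℝ × ℝ, Real.sign (a * p.1 + b * p.2) * Real.sign (c * p.1 + d * p.2)
        ∂((gaussianReal 0 1).prod (gaussianReal 0 1))) ≤ 0 := by
  have hJ := J_nonneg hab (show 0 ≤ a * (-c) + b * (-d) by linarith)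
  have heq : ∀ p : ℝ × ℝ,
      Real.sign (a * p.1 + b * p.2) * Real.sign ((-c) * p.1 + (-d) * p.2)
        = -(Real.sign (a * p.1 + b * p.2) * Real.sign (c * p.1 + d * p.2)) := by
    intro p
    rw [show (-c) * p.1 + (-d) * p.2 = -(c * p.1 + d * p.2) by ring, Real.sign_neg]
    ring
  simp_rw [heq] at hJ
  rw [integral_neg] at hJ
  linarith

lemma integral_pair_eq {Ω : Type*} [MeasurableSpace Ω] (μ : Measure Ω) [IsProbabilityMeasure μ]
    {X Y : Ω → ℝ} (hX : Measurable X) (hY : Measurable Y) (hXY : IndepFun X Y μ)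
    (hlX : μ.map X = gaussianReal 0 1) (hlY : μ.map Y = gaussianReal 0 1) (a b c d : ℝ) :
    ∫ ω, Real.sign (a * X ω + b * Y ω) * Real.sign (c * X ω + d * Y ω) ∂μ
      = ∫ p : ℝ × ℝ, Real.sign (a * p.1 + b * p.2) * Real.sign (c * p.1 + d * p.2)
          ∂((gaussianReal 0 1).prod (gaussianReal 0 1)) := by
  have hmap : μ.map (fun ω => (X ω, Y ω)) = (gaussianReal 0 1).prod (gaussianReal 0 1) := by
    rw [(indepFun_iff_map_prod_eq_prod_map_map hX.aemeasurable hY.aemeasurable).mp hXY, hlX, hlY]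
  rw [← hmap, integral_map (hX.prodMk hY).aemeasurable
    (measurable_signprod a b c d).aestronglyMeasurable]

end Aux

/-- For `G₁, G₂, G₃, G₄` i.i.d. `N(0,1)` and nonzero coefficient pairs, if the
covariances `ac + bd` and `a'c' + b'd'` have the same sign (their product is `≥ 0`),
then the product of the two sign-covariances
`E[sgn(aG₁+bG₂) sgn(cG₁+dG₂)] · E[sgn(a'G₃+b'G₄) sgn(c'G₃+d'G₄)]` is nonnegative. -/
theorem sign_covariance_product_nonneg
    {Ω : Type*} [MeasurableSpace Ω] (μ : Measure Ω) [IsProbabilityMeasure μ]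
    (G₁ G₂ G₃ G₄ : Ω → ℝ)
    (hG₁ : Measurable G₁) (hG₂ : Measurable G₂)
    (hG₃ : Measurable G₃) (hG₄ : Measurable G₄)
    (hind : iIndepFun ![G₁, G₂, G₃, G₄] μ)
    (hlaw₁ : μ.map G₁ = gaussianReal 0 1)
    (hlaw₂ : μ.map G₂ = gaussianReal 0 1)
    (hlaw₃ : μ.map G₃ = gaussianReal 0 1)
    (hlaw₄ : μ.map G₄ = gaussianReal 0 1)
    (a b c d a' b' c' d' : ℝ)
    (hab : (a, b) ≠ (0, 0)) (hcd : (c, d) ≠ (0, 0))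
    (hab' : (a', b') ≠ (0, 0)) (hcd' : (c', d') ≠ (0, 0))
    (hsign : 0 ≤ (a * c + b * d) * (a' * c' + b' * d')) :
    0 ≤ (∫ ω, Real.sign (a * G₁ ω + b * G₂ ω) * Real.sign (c * G₁ ω + d * G₂ ω) ∂μ) *
        (∫ ω, Real.sign (a' * G₃ ω + b' * G₄ ω) * Real.sign (c' * G₃ ω + d' * G₄ ω) ∂μ) := by
  have h12 : IndepFun G₁ G₂ μ := by
    simpa using hind.indepFun (show (0 : Fin 4) ≠ 1 by decide)
  have h34 : IndepFun G₃ G₄ μ := by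
    simpa using hind.indepFun (show (2 : Fin 4) ≠ 3 by decide)
  have habo : a ≠ 0 ∨ b ≠ 0 := by
    by_contra hc
    push_neg at hc
    exact hab (by rw [hc.1, hc.2])
  have habo' : a' ≠ 0 ∨ b' ≠ 0 := by
    by_contra hc
    push_neg at hc
    exact hab' (by rw [hc.1, hc.2])
  rw [integral_pair_eq μ hG₁ hG₂ h12 hlaw₁ hlaw₂ a b c d,
    integral_pair_eq μ hG₃ hG₄ h34 hlaw₃ hlaw₄ a' b' c' d']
  rcases le_total 0 (a * c + b * d) with h1|h1 <;>
    rcases le_total 0 (a' * c' + b' * d') with h2|h2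
  · exact mul_nonneg (J_nonneg habo h1) (J_nonneg habo' h2)
  · have h0 : (a * c + b * d) * (a' * c' + b' * d') = 0 :=
      le_antisymm (mul_nonpos_of_nonneg_of_nonpos h1 h2) hsign
    rcases mul_eq_zero.mp h0 with h|h
    · have : (∫ p : ℝ × ℝ, Real.sign (a * p.1 + b * p.2) * Real.sign (c * p.1 + d * p.2)
          ∂((gaussianReal 0 1).prod (gaussianReal 0 1))) = 0 :=
        le_antisymm (J_nonpos habo h.le) (J_nonneg habo h.ge)
      rw [this, zero_mul]
    · have : (∫ p : ℝ × ℝ, Real.sign (a' * p.1 + b' * p.2) * Real.sign (c' * p.1 + d' * p.2)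
          ∂((gaussianReal 0 1).prod (gaussianReal 0 1))) = 0 :=
        le_antisymm (J_nonpos habo' h.le) (J_nonneg habo' h.ge)
      rw [this, mul_zero]
  · have h0 : (a * c + b * d) * (a' * c' + b' * d') = 0 :=
      le_antisymm (mul_nonpos_of_nonpos_of_nonneg h1 h2) hsign
    rcases mul_eq_zero.mp h0 with h|h
    · have : (∫ p : ℝ × ℝ, Real.sign (a * p.1 + b * p.2) * Real.sign (c * p.1 + d * p.2)
          ∂((gaussianReal 0 1).prod (gaussianReal 0 1))) = 0 :=
        le_antisymm (J_nonpos habo h.le) (J_nonneg habo h.ge)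
      rw [this, zero_mul]
    · have : (∫ p : ℝ × ℝ, Real.sign (a' * p.1 + b' * p.2) * Real.sign (c' * p.1 + d' * p.2)
          ∂((gaussianReal 0 1).prod (gaussianReal 0 1))) = 0 :=
        le_antisymm (J_nonpos habo' h.le) (J_nonneg habo' h.ge)
      rw [this, mul_zero]
  · have hJ1 := J_nonpos habo h1
    have hJ2 := J_nonpos habo' h2
    nlinarith [mul_nonneg (neg_nonneg.mpr hJ1) (neg_nonneg.mpr hJ2)]
end
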